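/- Let C be an F_q-linear subspace of F_q^m × F_q^n × F_q^m of dimension m + k, and let C^⊥ be its (ordinary, untwisted) dual with respect to the standard dot product on F_q^{2m+n}. Let 𝔉_m be the complex matrix indexed by F_q^m × F_q^m with (a,b) entry ω^{−tr(a·b)}. Then for all complex numbers x and y: Λ_{C^⊥}(x,y) = q^{−(m+k)} · 𝔉_m · Λ_C(x+(q−1)y, x−y) · 𝔉_mᵀ, as an identity of complex matrices indexed by F_q^m × F_q^m. -/
import Mathlib


/-!
STATEMENT 17: The MacWilliams identity for the weight adjacency matrices of a
constraint code `C ⊆ F_q^m × F_q^n × F_q^m` of dimension `m + k` and its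
ordinary (untwisted) dual `C^⊥`:
`Λ_{C^⊥}(x,y) = q^{−(m+k)} · 𝔉_m · Λ_C(x+(q−1)y, x−y) · 𝔉_mᵀ`,
where `𝔉_m` has `(a,b)` entry `ω^{−tr(a·b)}`.
-/

open scoped Classical
open Matrix

noncomputable section

variable (p : ℕ) [Fact p.Prime] (F : Type) [Field F] [Fintype F] [Algebra (ZMod p) F]

/-- Hamming weight of a vector. -/
def wt {n : ℕ} (v : Fin n → F) : ℕ := (Finset.univ.filter fun i => v i ≠ 0).card

/-- The ordinary dual of `C` with respect to the standard dot product on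
`F_q^m × F_q^n × F_q^m ≅ F_q^{2m+n}`. -/
def dualSet {m n : ℕ} (C : Set ((Fin m → F) × (Fin n → F) × (Fin m → F))) :
    Set ((Fin m → F) × (Fin n → F) × (Fin m → F)) :=
  {v | ∀ c ∈ C, (∑ i, v.1 i * c.1 i) + (∑ i, v.2.1 i * c.2.1 i)
      + (∑ i, v.2.2 i * c.2.2 i) = 0}

/-- The weight adjacency matrix `Λ_S(x,y)`. -/
def WAM {m n : ℕ} (S : Set ((Fin m → F) × (Fin n → F) × (Fin m → F)))
    (x y : ℂ) : Matrix (Fin m → F) (Fin m → F) ℂ := fun w w' =>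
  ∑ pv : Fin n → F, if (w, pv, w') ∈ S then x ^ (n - wt F pv) * y ^ wt F pv else 0

/-- The Fourier matrix `𝔉_m` with `(a,b)` entry `ω^{−tr(a·b)}`. -/
def FourierMatNeg (m : ℕ) : Matrix (Fin m → F) (Fin m → F) ℂ := fun a b =>
  Complex.exp (2 * Real.pi * Complex.I / p) ^
    (-((Algebra.trace (ZMod p) F (∑ i, a i * b i)).val : ℤ))

set_option linter.unusedSectionVars false

namespace Stmt17Aux

/-- the root of unity -/
def ω : ℂ := Complex.exp (2 * Real.pi * Complex.I / p)

lemma hprim : IsPrimitiveRoot (ω p) p :=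
  Complex.isPrimitiveRoot_exp p (Fact.out : p.Prime).ne_zero

lemma hω : ω p ^ p = 1 := (hprim p).pow_eq_one

lemma ω_ne_zero : ω p ≠ 0 := Complex.exp_ne_zero _

/-- the additive character -/
def ψ : AddChar F ℂ :=
  (AddChar.zmodChar p (hω p)).compAddMonoidHom (Algebra.trace (ZMod p) F).toAddMonoidHom

lemma ψ_apply (a : F) : ψ p F a = ω p ^ (Algebra.trace (ZMod p) F a).val := by
  simp [ψ, AddChar.zmodChar_apply]

lemma ψ_sum {ι : Type*} (s : Finset ι) (f : ι → F) :
    ψ p F (∑ i ∈ s, f i) = ∏ i ∈ s, ψ p F (f i) := by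
  induction s using Finset.cons_induction with
  | empty => simp
  | cons a s ha ih => simp [ha, AddChar.map_add_eq_mul, ih]

lemma ψ_ne_one : ψ p F ≠ 1 := by
  haveI : CharP F p := charP_of_injective_ringHom (algebraMap (ZMod p) F).injective p
  have hr : ringChar F = p := ringChar.eq F p
  rw [AddChar.ne_one_iff]
  subst hr
  obtain ⟨b, hb⟩ := FiniteField.trace_to_zmod_nondegenerate F (one_ne_zero (α := F))
  rw [one_mul] at hb
  refine ⟨b, ?_⟩
  rw [ψ_apply]
  intro h
  rw [(hprim _).pow_eq_one_iff_dvd] at h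
  have hlt := ZMod.val_lt (Algebra.trace (ZMod (ringChar F)) F b)
  have h0 := Nat.eq_zero_of_dvd_of_lt h hlt
  exact hb (by rwa [← ZMod.val_eq_zero])

lemma sum_ψ : ∑ t : F, ψ p F t = 0 := AddChar.sum_eq_zero_of_ne_one (ψ_ne_one p F)

lemma sum_ψ_mul {u : F} (hu : u ≠ 0) : ∑ t : F, ψ p F (t * u) = 0 := by
  rw [← sum_ψ p F]
  exact Fintype.sum_bijective (fun t => t * u)
    (Finite.injective_iff_bijective.mp (mul_left_injective₀ hu)) _ _ (fun t => rfl)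

lemma ψ_neg_eq_inv (a : F) : ψ p F (-a) = (ψ p F a)⁻¹ := by
  have h : ψ p F (-a) * ψ p F a = 1 := by
    rw [← AddChar.map_add_eq_mul, neg_add_cancel, AddChar.map_zero_eq_one]
  exact eq_inv_of_mul_eq_one_left h

lemma Fneg_eq {m : ℕ} (w a : Fin m → F) :
    FourierMatNeg p F m w a = ψ p F (-(∑ i, w i * a i)) := by
  have h1 : FourierMatNeg p F m w a
      = (ω p ^ (Algebra.trace (ZMod p) F (∑ i, w i * a i)).val)⁻¹ := by
    show (ω p) ^ (-((Algebra.trace (ZMod p) F (∑ i, w i * a i)).val : ℤ)) = _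
    rw [_root_.zpow_neg, zpow_natCast]
  rw [h1, ψ_neg_eq_inv, ψ_apply]

/-- split a product over coordinates into powers, according to vanishing -/
lemma prod_ite_wt {n : ℕ} (v : Fin n → F) (x y : ℂ) :
    (∏ i, if v i = 0 then x else y) = x ^ (n - wt F v) * y ^ wt F v := by
  rw [← Finset.prod_filter_mul_prod_filter_not Finset.univ (fun i => v i = 0)]
  have hcard := Finset.card_filter_add_card_filter_not
    (s := (Finset.univ : Finset (Fin n))) (p := fun i => v i = 0)
  rw [Finset.card_univ, Fintype.card_fin] at hcard
  have h1 : (Finset.univ.filter fun i => ¬ v i = 0).card = wt F v := by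
    rw [wt]
  have h2 : (Finset.univ.filter fun i => v i = 0).card = n - wt F v := by omega
  rw [Finset.prod_congr rfl (fun i hi => if_pos (Finset.mem_filter.mp hi).2),
    Finset.prod_congr rfl (g := fun _ => y)
      (fun i hi => if_neg (Finset.mem_filter.mp hi).2),
    Finset.prod_const, Finset.prod_const, h1, h2]

lemma key1 (x y : ℂ) (u : F) :
    ∑ t : F, (if t = 0 then x else y) * ψ p F (t * u)
      = if u = 0 then x + ((Fintype.card F : ℂ) - 1) * y else x - y := by
  rw [← Finset.add_sum_erase Finset.univ _ (Finset.mem_univ (0:F))]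
  simp only [if_pos rfl, zero_mul, AddChar.map_zero_eq_one, mul_one]
  have herase : ∀ t ∈ Finset.univ.erase (0:F),
      (if t = 0 then x else y) * ψ p F (t * u) = y * ψ p F (t * u) := by
    intro t ht
    rw [if_neg (Finset.ne_of_mem_erase ht)]
  rw [Finset.sum_congr rfl herase, ← Finset.mul_sum]
  by_cases hu : u = 0
  · subst hu
    rw [if_pos rfl]
    simp only [mul_zero, AddChar.map_zero_eq_one]
    rw [Finset.sum_const, Finset.card_erase_of_mem (Finset.mem_univ _), Finset.card_univ]
    have h1 : (1:ℕ) ≤ Fintype.card F := Fintype.card_pos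
    rw [nsmul_eq_mul, Nat.cast_sub h1]
    push_cast
    ring
  · rw [if_neg hu, Finset.sum_erase_eq_sub (Finset.mem_univ _), sum_ψ_mul p F hu]
    simp only [zero_mul, AddChar.map_zero_eq_one, zero_sub, if_true, ite_true]
    ring

lemma key2 {n : ℕ} (x y : ℂ) (pc : Fin n → F) :
    ∑ pv : Fin n → F, x ^ (n - wt F pv) * y ^ wt F pv * ψ p F (∑ i, pv i * pc i)
      = (x + ((Fintype.card F : ℂ) - 1) * y) ^ (n - wt F pc) * (x - y) ^ wt F pc := by
  have step1 : ∀ pv : Fin n → F,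
      x ^ (n - wt F pv) * y ^ wt F pv * ψ p F (∑ i, pv i * pc i)
        = ∏ i, ((if pv i = 0 then x else y) * ψ p F (pv i * pc i)) := by
    intro pv
    rw [Finset.prod_mul_distrib, prod_ite_wt, ψ_sum]
  rw [Finset.sum_congr rfl (fun pv _ => step1 pv)]
  have hps := Finset.prod_univ_sum (fun _ : Fin n => (Finset.univ : Finset F))
    (fun i t => (if t = 0 then x else y) * ψ p F (t * pc i))
  rw [← Fintype.piFinset_univ, ← hps]
  rw [← prod_ite_wt F pc (x + ((Fintype.card F : ℂ) - 1) * y) (x - y)]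
  exact Finset.prod_congr rfl (fun i _ => key1 p F x y (pc i))

/-- the dot product on the triple product space -/
def dotV {m n : ℕ} (v c : (Fin m → F) × (Fin n → F) × (Fin m → F)) : F :=
  (∑ i, v.1 i * c.1 i) + (∑ i, v.2.1 i * c.2.1 i) + (∑ i, v.2.2 i * c.2.2 i)

lemma dotV_zero {m n : ℕ} (v : (Fin m → F) × (Fin n → F) × (Fin m → F)) :
    dotV F v 0 = 0 := by simp [dotV]

lemma dotV_add {m n : ℕ} (v c c' : (Fin m → F) × (Fin n → F) × (Fin m → F)) :
    dotV F v (c + c') = dotV F v c + dotV F v c' := by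
  simp [dotV, mul_add, Finset.sum_add_distrib]
  ring

lemma dotV_smul {m n : ℕ} (v : (Fin m → F) × (Fin n → F) × (Fin m → F)) (a : F)
    (c : (Fin m → F) × (Fin n → F) × (Fin m → F)) :
    dotV F v (a • c) = a * dotV F v c := by
  simp [dotV, Finset.mul_sum, mul_add, mul_left_comm]

lemma wt_neg {n : ℕ} (v : Fin n → F) : wt F (-v) = wt F v := by
  simp [wt, neg_eq_zero]

lemma orth {m n : ℕ} (C : Submodule F ((Fin m → F) × (Fin n → F) × (Fin m → F)))
    (v : (Fin m → F) × (Fin n → F) × (Fin m → F)) :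
    ∑ c : C, ψ p F (dotV F v c) =
      if v ∈ dualSet F (C : Set ((Fin m → F) × (Fin n → F) × (Fin m → F)))
        then (Fintype.card C : ℂ) else 0 := by
  by_cases hv : v ∈ dualSet F (C : Set ((Fin m → F) × (Fin n → F) × (Fin m → F)))
  · rw [if_pos hv]
    have h1 : ∀ c : C, ψ p F (dotV F v c) = 1 := fun c => by
      rw [show dotV F v (c : _) = 0 from hv (c : _) c.2, AddChar.map_zero_eq_one]
    rw [Finset.sum_congr rfl (fun c _ => h1 c)]
    simp
  · rw [if_neg hv]
    set φ : AddChar C ℂ := (ψ p F).compAddMonoidHom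
      { toFun := fun c : C => dotV F v c,
        map_zero' := by simpa using dotV_zero F v,
        map_add' := fun c c' => by
          have := dotV_add F v (c : _) (c' : _)
          simpa using this } with hφ
    have hφne : φ ≠ 1 := by
      rw [AddChar.ne_one_iff]
      simp only [dualSet, Set.mem_setOf_eq, not_forall] at hv
      obtain ⟨c0, hc0, hs⟩ := hv
      have hs' : dotV F v c0 ≠ 0 := hs
      obtain ⟨t, ht⟩ := AddChar.ne_one_iff.mp (ψ_ne_one p F)
      refine ⟨⟨(t * (dotV F v c0)⁻¹) • c0, C.smul_mem _ hc0⟩, ?_⟩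
      show ψ p F (dotV F v _) ≠ 1
      rw [dotV_smul, mul_assoc, inv_mul_cancel₀ hs', mul_one]
      exact ht
    have h0 := AddChar.sum_eq_zero_of_ne_one hφne
    exact h0

lemma sum_ite_mem {m n : ℕ} (C : Submodule F ((Fin m → F) × (Fin n → F) × (Fin m → F)))
    (g : ((Fin m → F) × (Fin n → F) × (Fin m → F)) → ℂ) :
    ∑ v : (Fin m → F) × (Fin n → F) × (Fin m → F),
      (if v ∈ (C : Set ((Fin m → F) × (Fin n → F) × (Fin m → F))) then g v else 0)
      = ∑ c : C, g c := by
  rw [← Finset.sum_filter]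
  exact Finset.sum_subtype _ (by simp) g

end Stmt17Aux

open Stmt17Aux

theorem stmt17 (m n k : ℕ)
    (C : Submodule F ((Fin m → F) × (Fin n → F) × (Fin m → F)))
    (hC : Module.finrank F C = m + k) (x y : ℂ) :
    WAM F (dualSet F (C : Set ((Fin m → F) × (Fin n → F) × (Fin m → F)))) x y
      = ((Fintype.card F : ℂ) ^ (m + k))⁻¹ •
          (FourierMatNeg p F m *
            WAM F (C : Set ((Fin m → F) × (Fin n → F) × (Fin m → F)))
              (x + ((Fintype.card F : ℂ) - 1) * y) (x - y) *
            (FourierMatNeg p F m)ᵀ) := by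
  have hq0 : (Fintype.card F : ℂ) ≠ 0 := Nat.cast_ne_zero.mpr Fintype.card_ne_zero
  have hcardC : (Fintype.card C : ℂ) = (Fintype.card F : ℂ) ^ (m + k) := by
    rw [Module.card_eq_pow_finrank (K := F) (V := C), hC]
    push_cast
    ring
  have hCne : (Fintype.card C : ℂ) ≠ 0 := by
    rw [hcardC]; exact pow_ne_zero _ hq0
  set X := x + ((Fintype.card F : ℂ) - 1) * y with hX
  set Y := x - y with hY
  funext w w'
  set V := (Fin m → F) × (Fin n → F) × (Fin m → F) with hV
  -- RHS computation
  have rhs1 : (FourierMatNeg p F m * WAM F (C : Set V) X Y * (FourierMatNeg p F m)ᵀ) w w'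
      = ∑ c : C, FourierMatNeg p F m w (c : V).1
          * (X ^ (n - wt F (c : V).2.1) * Y ^ wt F (c : V).2.1)
          * FourierMatNeg p F m w' (c : V).2.2 := by
    rw [← sum_ite_mem F C (fun v => FourierMatNeg p F m w v.1
      * (X ^ (n - wt F v.2.1) * Y ^ wt F v.2.1) * FourierMatNeg p F m w' v.2.2)]
    simp only [Fintype.sum_prod_type]
    simp only [Matrix.mul_apply, Matrix.transpose_apply, WAM, Finset.sum_mul,
      Finset.mul_sum, mul_ite, ite_mul, mul_zero, zero_mul]
    rw [Finset.sum_comm]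
    exact Finset.sum_congr rfl fun a _ => Finset.sum_comm
  -- LHS computation
  have hterm : ∀ pv : Fin n → F,
      (if (w, pv, w') ∈ dualSet F (C : Set V) then x ^ (n - wt F pv) * y ^ wt F pv else 0)
        = (Fintype.card C : ℂ)⁻¹ * ∑ c : C,
            (x ^ (n - wt F pv) * y ^ wt F pv) * ψ p F (dotV F (w, pv, w') (c : V)) := by
    intro pv
    rw [← Finset.mul_sum, orth p F C (w, pv, w')]
    by_cases h : (w, pv, w') ∈ dualSet F (C : Set V)
    · rw [if_pos h, if_pos h]
      field_simp
    · rw [if_neg h, if_neg h]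
      simp
  have lhs1 : WAM F (dualSet F (C : Set V)) x y w w' = (Fintype.card C : ℂ)⁻¹ *
      ∑ c : C, (ψ p F (∑ i, w i * (c : V).1 i) * ψ p F (∑ i, w' i * (c : V).2.2 i))
        * (X ^ (n - wt F (c : V).2.1) * Y ^ wt F (c : V).2.1) := by
    rw [WAM, Finset.sum_congr rfl fun pv _ => hterm pv, ← Finset.mul_sum]
    congr 1
    rw [Finset.sum_comm]
    refine Finset.sum_congr rfl fun c _ => ?_
    have hsplit : ∀ pv : Fin n → F, ψ p F (dotV F (w, pv, w') (c : V))
        = ψ p F (∑ i, w i * (c : V).1 i) * ψ p F (∑ i, pv i * (c : V).2.1 i)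
            * ψ p F (∑ i, w' i * (c : V).2.2 i) := by
      intro pv
      show ψ p F (_ + _ + _) = _
      rw [AddChar.map_add_eq_mul, AddChar.map_add_eq_mul]
    calc ∑ pv : Fin n → F,
          (x ^ (n - wt F pv) * y ^ wt F pv) * ψ p F (dotV F (w, pv, w') (c : V))
        = ∑ pv : Fin n → F,
            (ψ p F (∑ i, w i * (c : V).1 i) * ψ p F (∑ i, w' i * (c : V).2.2 i))
              * (x ^ (n - wt F pv) * y ^ wt F pv * ψ p F (∑ i, pv i * (c : V).2.1 i)) := by
          refine Finset.sum_congr rfl fun pv _ => ?_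
          rw [hsplit pv]
          ring
      _ = (ψ p F (∑ i, w i * (c : V).1 i) * ψ p F (∑ i, w' i * (c : V).2.2 i))
            * ∑ pv : Fin n → F,
              x ^ (n - wt F pv) * y ^ wt F pv * ψ p F (∑ i, pv i * (c : V).2.1 i) :=
          (Finset.mul_sum _ _ _).symm
      _ = (ψ p F (∑ i, w i * (c : V).1 i) * ψ p F (∑ i, w' i * (c : V).2.2 i))
            * (X ^ (n - wt F (c : V).2.1) * Y ^ wt F (c : V).2.1) := by
          rw [key2 p F x y (c : V).2.1, hX, hY]
  -- negate
  have lhs2 : ∑ c : C, (ψ p F (∑ i, w i * (c : V).1 i) * ψ p F (∑ i, w' i * (c : V).2.2 i))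
        * (X ^ (n - wt F (c : V).2.1) * Y ^ wt F (c : V).2.1)
      = ∑ c : C, FourierMatNeg p F m w (c : V).1
          * (X ^ (n - wt F (c : V).2.1) * Y ^ wt F (c : V).2.1)
          * FourierMatNeg p F m w' (c : V).2.2 := by
    refine Fintype.sum_equiv (Equiv.neg C) _ _ fun c => ?_
    rw [Fneg_eq, Fneg_eq]
    have h1 : ((Equiv.neg C c : C) : V) = -(c : V) := by simp [Equiv.neg]
    rw [h1]
    simp only [Prod.fst_neg, Prod.snd_neg, Pi.neg_apply, mul_neg, neg_neg,
      Finset.sum_neg_distrib, wt_neg]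
    ring
  show WAM F (dualSet F (C : Set V)) x y w w' = _
  rw [lhs1, lhs2, ← rhs1, Matrix.smul_apply, smul_eq_mul, hcardC]
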